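/- Let H be a set of hypotheses (pairs of regular expressions e ≤ f over an alphabet Σ). The H-closure cl_H on languages over Σ, defined as the smallest function such that cl_H(L) ⊇ L and whenever u·⟦f⟧·v ⊆ cl_H(L) for some (e ≤ f) ∈ H and words u, v, also u·⟦e⟧·v ⊆ cl_H(L), satisfies cl_H(L) · cl_H(K) ⊆ cl_H(L · K) for all languages L, K. -/

import Mathlib

/-- The least (pre)fixpoint of `y ↦ x ⊔ s y` (Knaster–Tarski); for monotone `s`
this gives the least closure above `s`. -/
def lstar {X : Type*} [CompleteLattice X] (s : X → X) (x : X) : X :=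
  sInf {y | x ⊔ s y ≤ y}

/-- The one-step function associated with a set `H` of hypotheses `e ≤ f`
(pairs of regular expressions): it adds `u·⟦e⟧·v` whenever `u·⟦f⟧·v ⊆ L`. -/
def onestep {α : Type*} (H : Set (RegularExpression α × RegularExpression α))
    (L : Language α) : Language α :=
  {w | ∃ p ∈ H, ∃ u v : List α,
    (∀ x ∈ p.2.matches', u ++ x ++ v ∈ L) ∧ ∃ x ∈ p.1.matches', w = u ++ x ++ v}

/-- The `H`-closure of a language: the least closure above the one-step function of `H`. -/
def clH {α : Type*} (H : Set (RegularExpression α × RegularExpression α)) :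
    Language α → Language α :=
  lstar (onestep H)

/-! Closed languages (`onestep H M ≤ M`) are stable under taking contexts `{w | u ++ w ++ v ∈ M}`,
so the least closed language above `L` stays inside any such context that contains `L`.
Applying this first to the right factor (context `l ++ _`) and then to the left one (context
`_ ++ k`) moves both closures inside `cl_H(L · K)`. -/

section lstar

variable {X : Type*} [CompleteLattice X] (s : X → X)

lemma le_lstar (x : X) : x ≤ lstar s x :=
  le_sInf fun _ hy => le_sup_left.trans hy

lemma lstar_le {x y : X} (hx : x ≤ y) (hy : s y ≤ y) : lstar s x ≤ y :=
  sInf_le (sup_le hx hy)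

lemma map_lstar_le {s} (hs : Monotone s) (x : X) : s (lstar s x) ≤ lstar s x :=
  le_sInf fun _ hy => (hs (sInf_le hy)).trans (le_sup_right.trans hy)

end lstar

section onestep

variable {α : Type*} (H : Set (RegularExpression α × RegularExpression α))

lemma onestep_mono : Monotone (onestep H) := by
  rintro L M hLM w ⟨p, hp, u, v, hf, x, hx, rfl⟩
  exact ⟨p, hp, u, v, fun y hy => hLM (hf y hy), x, hx, rfl⟩

lemma onestep_context_le {M : Language α} (hM : onestep H M ≤ M) (u v : List α) :
    onestep H {w | u ++ w ++ v ∈ M} ≤ {w | u ++ w ++ v ∈ M} := by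
  rintro _ ⟨p, hp, u', v', hf, x, hx, rfl⟩
  refine hM ⟨p, hp, u ++ u', v' ++ v, fun y hy => ?_, x, hx, by simp⟩
  have h : u ++ (u' ++ y ++ v') ++ v ∈ M := hf y hy
  simpa only [List.append_assoc] using h

lemma append_mem_clH {L N : Language α} {u v : List α}
    (hL : ∀ w ∈ L, u ++ w ++ v ∈ clH H N) {w : List α} (hw : w ∈ clH H L) :
    u ++ w ++ v ∈ clH H N :=
  lstar_le (onestep H) hL (onestep_context_le H (map_lstar_le (onestep_mono H) N) u v) hw

end onestep

/-- The `H`-closure is contextual: `cl_H(L) · cl_H(K) ⊆ cl_H(L · K)`. -/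
theorem clH_mul_le {α : Type*} (H : Set (RegularExpression α × RegularExpression α))
    (L K : Language α) : clH H L * clH H K ≤ clH H (L * K) := by
  have right (l : List α) (hl : l ∈ L) (k : List α) (hk : k ∈ clH H K) :
      l ++ k ∈ clH H (L * K) := by
    have h : ∀ k ∈ K, l ++ k ++ [] ∈ clH H (L * K) := fun k hk => by
      rw [List.append_nil]
      exact le_lstar (onestep H) (L * K) (Language.append_mem_mul hl hk)
    simpa using append_mem_clH H h hk
  intro w hw
  obtain ⟨l, hl, k, hk, rfl⟩ := Language.mem_mul.mp hw
  have h : ∀ l ∈ L, [] ++ l ++ k ∈ clH H (L * K) := fun l hl => by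
    rw [List.nil_append]
    exact right l hl k hk
  exact List.nil_append (l ++ k) ▸ append_mem_clH H h hl
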